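/- Let ℓ, γ, m ∈ ℕ with γ ≥ 1, and identify the state space with (ℝ^ℓ)^γ, writing x = (ζ₁,…,ζ_γ). Let f_γ : (ℝ^ℓ)^γ → ℝ^ℓ and g_γ : (ℝ^ℓ)^γ → Matrix (Fin ℓ) (Fin m) ℝ, and define the controlled vector field V(x,u) ∈ (ℝ^ℓ)^γ by V(x,u)_i = ζ_{i+1} for 1 ≤ i ≤ γ−1 and V(x,u)_γ = f_γ(x) + g_γ(x)·u. Let q ∈ ℕ with 1 ≤ q ≤ γ and set p = γ − q + 1. Fix h > 0, weights b₁,…,b_p ∈ ℝ with Σᵢ bᵢ = 1, and coefficients a_{i,j} ∈ ℝ (1 ≤ j < i ≤ p), and define the Runge–Kutta map F^{a,p}_h(x,u) = x + h Σ_{i=1}^{p} bᵢ V(zᵢ,u) with z₁ = x and zᵢ = x + h Σ_{j=1}^{i−1} a_{i,j} V(z_j,u). Let s̃ : (ℝ^ℓ)^q → ℝ be such that for every fixed (ζ₁,…,ζ_{q−1}) the map ζ ↦ s̃(ζ₁,…,ζ_{q−1},ζ) is concave, and set s(x) = s̃(ζ₁,…,ζ_q). Then for every function α : ℝ → ℝ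 and every x ∈ (ℝ^ℓ)^γ, the map u ↦ −s(F^{a,p}_h(x,u)) + s(x) − h·α(s(x)) is convex on ℝᵐ. -/

import Mathlib

/-!
Only the last block of the vector field sees the control, and every Runge–Kutta stage shifts
information one block up. So block `k` of stage `i` is independent of `u` while `i + k < γ` and
affine in `u` while `i + k ≤ γ`. With `p = γ - q + 1` stages, the blocks `ζ₁, …, ζ_{q-1}` of
`F_h(x, u)` are therefore constant in `u` and `ζ_q` is affine in `u`, so `s ∘ F_h(x, ·)` is a
concave function of the last argument composed with an affine map.
-/

/-- Matrix–vector multiplication as a map between Euclidean spaces. -/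
noncomputable def mulVecE {n m : ℕ} (g : Matrix (Fin n) (Fin m) ℝ)
    (u : EuclideanSpace ℝ (Fin m)) : EuclideanSpace ℝ (Fin n) :=
  (WithLp.equiv 2 (Fin n → ℝ)).symm (g.mulVec ((WithLp.equiv 2 (Fin m → ℝ)) u))

/-- The controlled block chain-of-integrators vector field:
`V(x,u)_i = x_{i+1}` for `i < γ−1` and `V(x,u)_{γ−1} = f_γ(x) + g_γ(x)·u` (0-indexed). -/
noncomputable def chainVF {ℓ γ m : ℕ}
    (fγ : (Fin γ → EuclideanSpace ℝ (Fin ℓ)) → EuclideanSpace ℝ (Fin ℓ))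
    (gγ : (Fin γ → EuclideanSpace ℝ (Fin ℓ)) → Matrix (Fin ℓ) (Fin m) ℝ)
    (x : Fin γ → EuclideanSpace ℝ (Fin ℓ)) (u : EuclideanSpace ℝ (Fin m)) :
    Fin γ → EuclideanSpace ℝ (Fin ℓ) :=
  fun i => if hi : (i : ℕ) + 1 < γ then x ⟨(i : ℕ) + 1, hi⟩ else fγ x + mulVecE (gγ x) u

/-- Runge–Kutta stage points (0-indexed): `z 0 = x`,
`z i = x + h • Σ_{j<i} a i j • v j (z j)`. -/
noncomputable def rkStages {S : Type*} [AddCommGroup S] [Module ℝ S]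
    (v : ℕ → S → S) (a : ℕ → ℕ → ℝ) (h : ℝ) (x : S) : ℕ → S :=
  fun i => Nat.strongRecOn i fun i ih =>
    x + h • ∑ j ∈ (Finset.range i).attach, a i j.1 • v j.1 (ih j.1 (Finset.mem_range.mp j.2))

/-- The `p`-stage Runge–Kutta map for the block chain-of-integrators dynamics. -/
noncomputable def rkMapChain {ℓ γ m : ℕ}
    (fγ : (Fin γ → EuclideanSpace ℝ (Fin ℓ)) → EuclideanSpace ℝ (Fin ℓ))
    (gγ : (Fin γ → EuclideanSpace ℝ (Fin ℓ)) → Matrix (Fin ℓ) (Fin m) ℝ)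
    (p : ℕ) (b : ℕ → ℝ) (a : ℕ → ℕ → ℝ) (h : ℝ)
    (x : Fin γ → EuclideanSpace ℝ (Fin ℓ)) (u : EuclideanSpace ℝ (Fin m)) :
    Fin γ → EuclideanSpace ℝ (Fin ℓ) :=
  x + h • ∑ i ∈ Finset.range p,
    b i • chainVF fγ gγ (rkStages (fun _ z => chainVF fγ gγ z u) a h x i) u

open Function Set

section FunctionSubmodules

variable (E M : Type*) [AddCommGroup M] [Module ℝ M]

def constantFunctions : Submodule ℝ (E → M) where
  carrier := {φ | ∀ u v, φ u = φ v}
  zero_mem' _ _ := rfl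
  add_mem' hφ hψ u v := by simp only [Pi.add_apply, hφ u v, hψ u v]
  smul_mem' c _ hφ u v := by simp only [Pi.smul_apply, hφ u v]

variable {E M} in
lemma const_mem_constantFunctions (c : M) : Function.const E c ∈ constantFunctions E M :=
  fun _ _ => rfl

variable [AddCommGroup E] [Module ℝ E]

def affineFunctions : Submodule ℝ (E → M) where
  carrier := {φ | ∃ A : E →ᵃ[ℝ] M, ⇑A = φ}
  zero_mem' := ⟨0, AffineMap.coe_zero⟩
  add_mem' := by
    rintro _ _ ⟨A, rfl⟩ ⟨B, rfl⟩
    exact ⟨A + B, AffineMap.coe_add A B⟩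
  smul_mem' := by
    rintro c _ ⟨A, rfl⟩
    exact ⟨c • A, AffineMap.coe_smul c A⟩

variable {E M}

lemma const_mem_affineFunctions (c : M) : Function.const E c ∈ affineFunctions E M :=
  ⟨AffineMap.const ℝ E c, AffineMap.coe_const ℝ E c⟩

lemma add_linearMap_mem_affineFunctions (c : M) (L : E →ₗ[ℝ] M) :
    (fun u => c + L u) ∈ affineFunctions E M :=
  add_mem (const_mem_affineFunctions c) ⟨L.toAffineMap, rfl⟩

/-- The shape shared by a Runge–Kutta stage and the Runge–Kutta map, read as a function of `u`. -/
lemma rk_combination_mem {E M ι : Type*} [AddCommGroup M] [Module ℝ M] (P : Submodule ℝ (E → M))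
    (hP : ∀ c : M, Function.const E c ∈ P) (x : M) (h : ℝ) (s : Finset ι) (c : ι → ℝ)
    (w : ι → E → M) (hw : ∀ j ∈ s, w j ∈ P) :
    (fun u => x + h • ∑ j ∈ s, c j • w j u) ∈ P := by
  have hfun : (fun u => x + h • ∑ j ∈ s, c j • w j u) =
      Function.const E x + h • ∑ j ∈ s, c j • w j := by
    ext u
    simp only [Pi.add_apply, Pi.smul_apply, Finset.sum_apply, Function.const_apply]
  rw [hfun]
  exact add_mem (hP x) (Submodule.smul_mem _ _ (Submodule.sum_mem _ fun j hj =>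
    Submodule.smul_mem _ _ (hw j hj)))

end FunctionSubmodules

lemma ConcaveOn.comp_update_affine {ι M E : Type*} [DecidableEq ι] [AddCommGroup M]
    [Module ℝ M] [AddCommGroup E] [Module ℝ E] {st : (ι → M) → ℝ} {i₀ : ι}
    (hst : ∀ w, ConcaveOn ℝ univ fun ζ => st (update w i₀ ζ)) {G : E → ι → M}
    (hconst : ∀ j ≠ i₀, (fun u => G u j) ∈ constantFunctions E M)
    (haff : (fun u => G u i₀) ∈ affineFunctions E M) :
    ConcaveOn ℝ univ fun u => st (G u) := by
  obtain ⟨A, hA⟩ := haff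
  have hG : ∀ u, G u = update (G 0) i₀ (A u) := by
    intro u
    ext1 j
    rcases eq_or_ne j i₀ with rfl | hj
    · rw [update_self, hA]
    · rw [update_of_ne hj]
      exact hconst j hj u 0
  have hcomp : (fun u => st (G u)) = (fun ζ => st (update (G 0) i₀ ζ)) ∘ A :=
    funext fun u => congrArg st (hG u)
  simpa only [hcomp, preimage_univ] using (hst (G 0)).comp_affineMap A

lemma rkStages_eq {S : Type*} [AddCommGroup S] [Module ℝ S]
    (v : ℕ → S → S) (a : ℕ → ℕ → ℝ) (h : ℝ) (x : S) (i : ℕ) :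
    rkStages v a h x i = x + h • ∑ j ∈ Finset.range i, a i j • v j (rkStages v a h x j) := by
  rw [rkStages, Nat.strongRecOn_eq]
  congr 2
  exact Finset.sum_attach (Finset.range i) fun j => a i j • v j (rkStages v a h x j)

lemma rkStages_zero {S : Type*} [AddCommGroup S] [Module ℝ S]
    (v : ℕ → S → S) (a : ℕ → ℕ → ℝ) (h : ℝ) (x : S) : rkStages v a h x 0 = x := by
  rw [rkStages_eq, Finset.range_zero, Finset.sum_empty, smul_zero, add_zero]

section ChainIntegrator

variable {ℓ γ m : ℕ}
  (fγ : (Fin γ → EuclideanSpace ℝ (Fin ℓ)) → EuclideanSpace ℝ (Fin ℓ))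
  (gγ : (Fin γ → EuclideanSpace ℝ (Fin ℓ)) → Matrix (Fin ℓ) (Fin m) ℝ)
  (a : ℕ → ℕ → ℝ) (h : ℝ) (x : Fin γ → EuclideanSpace ℝ (Fin ℓ))

local notation "E" => EuclideanSpace ℝ (Fin m)
local notation "M" => EuclideanSpace ℝ (Fin ℓ)

lemma chainVF_apply_of_lt (z : Fin γ → M) (u : E) (k : Fin γ) (hk : (k : ℕ) + 1 < γ) :
    chainVF fγ gγ z u k = z ⟨k + 1, hk⟩ :=
  dif_pos hk

lemma chainVF_apply_last (z : Fin γ → M) (u : E) (k : Fin γ) (hk : ¬(k : ℕ) + 1 < γ) :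
    chainVF fγ gγ z u k = fγ z + mulVecE (gγ z) u :=
  dif_neg hk

lemma mulVecE_eq_toLin' {n : ℕ} (g : Matrix (Fin n) (Fin m) ℝ) (u : E) :
    mulVecE g u = (WithLp.linearEquiv 2 ℝ (Fin n → ℝ)).symm
      (Matrix.toLin' g (WithLp.linearEquiv 2 ℝ (Fin m → ℝ) u)) :=
  rfl

lemma chainVF_apply_mem_affineFunctions (k : Fin γ) :
    (fun u => chainVF fγ gγ x u k) ∈ affineFunctions E M := by
  by_cases hk : (k : ℕ) + 1 < γ
  · simp only [chainVF_apply_of_lt fγ gγ _ _ k hk]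
    exact const_mem_affineFunctions _
  · simp only [chainVF_apply_last fγ gγ _ _ k hk, mulVecE_eq_toLin']
    exact add_linearMap_mem_affineFunctions (fγ x)
      ((WithLp.linearEquiv 2 ℝ (Fin ℓ → ℝ)).symm.toLinearMap ∘ₗ Matrix.toLin' (gγ x) ∘ₗ
        (WithLp.linearEquiv 2 ℝ (Fin m → ℝ)).toLinearMap)

noncomputable def chainStage (i : ℕ) (u : E) : Fin γ → M :=
  rkStages (fun _ z => chainVF fγ gγ z u) a h x i

local notation "Z" => chainStage fγ gγ a h x

lemma chainStage_apply (i : ℕ) (k : Fin γ) (u : E) :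
    Z i u k = x k + h • ∑ j ∈ Finset.range i, a i j • chainVF fγ gγ (Z j u) u k := by
  rw [chainStage, rkStages_eq]
  simp only [Pi.add_apply, Pi.smul_apply, Finset.sum_apply, chainStage]

lemma chainStage_apply_mem_constantFunctions :
    ∀ i (k : Fin γ), i + k < γ → (fun u => Z i u k) ∈ constantFunctions E M := by
  intro i
  induction i using Nat.strong_induction_on with
  | _ i ih =>
    intro k hik
    simp only [chainStage_apply]
    refine rk_combination_mem _ const_mem_constantFunctions _ _ _ _ _ fun j hj => ?_
    have hj : j < i := Finset.mem_range.mp hj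
    have hk : (k : ℕ) + 1 < γ := by omega
    simp only [chainVF_apply_of_lt fγ gγ _ _ k hk]
    exact ih j hj ⟨k + 1, hk⟩ (by simp only; omega)

lemma chainVF_chainStage_mem_affineFunctions_of (i : ℕ) (k : Fin γ) (hik : i + k < γ)
    (hnext : ∀ hk : (k : ℕ) + 1 < γ, (fun u => Z i u ⟨k + 1, hk⟩) ∈ affineFunctions E M) :
    (fun u => chainVF fγ gγ (Z i u) u k) ∈ affineFunctions E M := by
  by_cases hk : (k : ℕ) + 1 < γ
  · simpa only [chainVF_apply_of_lt fγ gγ _ _ k hk] using hnext hk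
  · obtain rfl : i = 0 := by omega
    simpa only [chainStage, rkStages_zero] using chainVF_apply_mem_affineFunctions fγ gγ x k

lemma chainStage_apply_mem_affineFunctions :
    ∀ i (k : Fin γ), i + k ≤ γ → (fun u => Z i u k) ∈ affineFunctions E M := by
  intro i
  induction i using Nat.strong_induction_on with
  | _ i ih =>
    intro k hik
    simp only [chainStage_apply]
    refine rk_combination_mem _ const_mem_affineFunctions _ _ _ _ _ fun j hj => ?_
    have hj : j < i := Finset.mem_range.mp hj
    exact chainVF_chainStage_mem_affineFunctions_of fγ gγ a h x j k (by omega)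
      fun hk => ih j hj ⟨k + 1, hk⟩ (by simp only; omega)

lemma chainVF_chainStage_mem_constantFunctions (i : ℕ) (k : Fin γ) (hik : i + k + 1 < γ) :
    (fun u => chainVF fγ gγ (Z i u) u k) ∈ constantFunctions E M := by
  have hk : (k : ℕ) + 1 < γ := by omega
  simpa only [chainVF_apply_of_lt fγ gγ _ _ k hk] using
    chainStage_apply_mem_constantFunctions fγ gγ a h x i ⟨k + 1, hk⟩ (by simp only; omega)

lemma chainVF_chainStage_mem_affineFunctions (i : ℕ) (k : Fin γ) (hik : i + k < γ) :
    (fun u => chainVF fγ gγ (Z i u) u k) ∈ affineFunctions E M :=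
  chainVF_chainStage_mem_affineFunctions_of fγ gγ a h x i k hik fun hk =>
    chainStage_apply_mem_affineFunctions fγ gγ a h x i ⟨k + 1, hk⟩ (by simp only; omega)

variable (p : ℕ) (b : ℕ → ℝ)

lemma rkMapChain_apply (u : E) (k : Fin γ) :
    rkMapChain fγ gγ p b a h x u k =
      x k + h • ∑ i ∈ Finset.range p, b i • chainVF fγ gγ (Z i u) u k := by
  simp only [rkMapChain, Pi.add_apply, Pi.smul_apply, Finset.sum_apply, chainStage]

lemma rkMapChain_apply_mem_constantFunctions (k : Fin γ) (hk : p + k < γ) :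
    (fun u => rkMapChain fγ gγ p b a h x u k) ∈ constantFunctions E M := by
  simp only [rkMapChain_apply]
  exact rk_combination_mem _ const_mem_constantFunctions _ _ _ _ _ fun i hi =>
    chainVF_chainStage_mem_constantFunctions fγ gγ a h x i k (by have := Finset.mem_range.mp hi; omega)

lemma rkMapChain_apply_mem_affineFunctions (k : Fin γ) (hk : p + k ≤ γ) :
    (fun u => rkMapChain fγ gγ p b a h x u k) ∈ affineFunctions E M := by
  simp only [rkMapChain_apply]
  exact rk_combination_mem _ const_mem_affineFunctions _ _ _ _ _ fun i hi =>
    chainVF_chainStage_mem_affineFunctions fγ gγ a h x i k (by have := Finset.mem_range.mp hi; omega)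

end ChainIntegrator

theorem stmt5 {ℓ γ m : ℕ}
    (fγ : (Fin γ → EuclideanSpace ℝ (Fin ℓ)) → EuclideanSpace ℝ (Fin ℓ))
    (gγ : (Fin γ → EuclideanSpace ℝ (Fin ℓ)) → Matrix (Fin ℓ) (Fin m) ℝ)
    (q : ℕ) (hq1 : 1 ≤ q) (hqγ : q ≤ γ) (p : ℕ) (hpdef : p = γ - q + 1)
    (h : ℝ)
    (b : ℕ → ℝ) (a : ℕ → ℕ → ℝ)
    (st : (Fin q → EuclideanSpace ℝ (Fin ℓ)) → ℝ)
    (hconc : ∀ w : Fin q → EuclideanSpace ℝ (Fin ℓ),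
      ConcaveOn ℝ Set.univ
        (fun ζ : EuclideanSpace ℝ (Fin ℓ) =>
          st (Function.update w ⟨q - 1, by omega⟩ ζ)))
    (s : (Fin γ → EuclideanSpace ℝ (Fin ℓ)) → ℝ)
    (hs : ∀ x : Fin γ → EuclideanSpace ℝ (Fin ℓ),
      s x = st (fun j => x (Fin.castLE hqγ j)))
    (α : ℝ → ℝ) (x : Fin γ → EuclideanSpace ℝ (Fin ℓ)) :
    ConvexOn ℝ Set.univ
      (fun u : EuclideanSpace ℝ (Fin m) =>
        -s (rkMapChain fγ gγ p b a h x u) + s x - h * α (s x)) := by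
  have hconcave : ConcaveOn ℝ univ fun u => s (rkMapChain fγ gγ p b a h x u) := by
    simp only [hs]
    refine ConcaveOn.comp_update_affine hconc (fun j hj => ?_) ?_
    · have hj : (j : ℕ) ≠ q - 1 := fun hj' => hj (Fin.ext hj')
      exact rkMapChain_apply_mem_constantFunctions fγ gγ a h x p b _ (by rw [Fin.val_castLE]; omega)
    · exact rkMapChain_apply_mem_affineFunctions fγ gγ a h x p b _ (by rw [Fin.val_castLE]; omega)
  simp only [add_sub_assoc]
  exact hconcave.neg.add_const _
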